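/- Let L and L′ be complex Lie algebras admitting bases e₁,…,e₅ and f₁,…,f₅ respectively, whose only nonzero brackets among basis vectors (up to antisymmetry) are: in L: [e₂,e₃]=e₁, [e₃,e₄]=e₂, [e₃,e₅]=e₄, [e₄,e₅]=e₁; in L′: [f₃,f₄]=f₂, [f₁,f₅]=f₂, [f₃,f₅]=f₁, [f₄,f₅]=f₃. Then L and L′ are isomorphic as Lie algebras over ℂ. -/

import Mathlib

/-!
In the basis `g₁ = -f₂, g₂ = -f₁, g₃ = f₅, g₄ = f₃, g₅ = -f₄` of `L'` the brackets are exactly those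
of `d₉(0:0)`, and two Lie algebras with bases sharing their structure constants are isomorphic
through the linear equivalence matching the bases.
-/

/-- `Realizes L c` means that the complex Lie algebra `L` admits a basis `e₁, …, e₅`
(indexed by `Fin 5`) in which the brackets of basis vectors are given by the
structure constants `c`, i.e. `⁅eᵢ, eⱼ⁆ = ∑ₖ c i j k • eₖ` for all `i < j`,
all brackets of basis vectors being determined by these via antisymmetry. -/
def Realizes (L : Type) [LieRing L] [LieAlgebra ℂ L]
    (c : Fin 5 → Fin 5 → Fin 5 → ℂ) : Prop :=
  ∃ e : Module.Basis (Fin 5) ℂ L, ∀ i j : Fin 5, i < j →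
    ⁅e i, e j⁆ = ∑ k, c i j k • e k

/-- The nilpotent pattern `d₉(0:0)`: `[e₂,e₃]=e₁`, `[e₃,e₄]=e₂`, `[e₃,e₅]=e₄`, `[e₄,e₅]=e₁`. -/
def patternL : Fin 5 → Fin 5 → Fin 5 → ℂ := fun i j =>
  if i = 1 ∧ j = 2 then ![1, 0, 0, 0, 0]
  else if i = 2 ∧ j = 3 then ![0, 1, 0, 0, 0]
  else if i = 2 ∧ j = 4 then ![0, 0, 0, 1, 0]
  else if i = 3 ∧ j = 4 then ![1, 0, 0, 0, 0]
  else 0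

/-- The nilpotent pattern `d₁₂(0:0:0)`: `[f₃,f₄]=f₂`, `[f₁,f₅]=f₂`, `[f₃,f₅]=f₁`, `[f₄,f₅]=f₃`. -/
def patternL' : Fin 5 → Fin 5 → Fin 5 → ℂ := fun i j =>
  if i = 2 ∧ j = 3 then ![0, 1, 0, 0, 0]
  else if i = 0 ∧ j = 4 then ![0, 1, 0, 0, 0]
  else if i = 2 ∧ j = 4 then ![1, 0, 0, 0, 0]
  else if i = 3 ∧ j = 4 then ![0, 0, 1, 0, 0]
  else 0

open Module

section StructureConstants

variable {R ι L L' : Type*} [CommRing R] [LieRing L] [LieAlgebra R L] [LieRing L'] [LieAlgebra R L']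

theorem LinearMap.map_lie_of_basis (b : Basis ι R L) (φ : L →ₗ[R] L')
    (h : ∀ i j, φ ⁅b i, b j⁆ = ⁅φ (b i), φ (b j)⁆) (x y : L) : φ ⁅x, y⁆ = ⁅φ x, φ y⁆ := by
  have hB : (LieModule.toEnd R L L : L →ₗ[R] L →ₗ[R] L).compr₂ φ =
      (LieModule.toEnd R L' L' : L' →ₗ[R] L' →ₗ[R] L').compl₁₂ φ φ :=
    LinearMap.ext_basis b b h
  exact LinearMap.congr_fun₂ hB x y

theorem LinearMap.map_lie_of_basis_of_lt [LinearOrder ι] (b : Basis ι R L) (φ : L →ₗ[R] L')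
    (h : ∀ i j, i < j → φ ⁅b i, b j⁆ = ⁅φ (b i), φ (b j)⁆) (x y : L) : φ ⁅x, y⁆ = ⁅φ x, φ y⁆ := by
  refine φ.map_lie_of_basis b (fun i j ↦ ?_) x y
  rcases lt_trichotomy i j with hij | rfl | hji
  · exact h i j hij
  · simp only [lie_self, map_zero]
  · rw [← lie_skew, map_neg, h j i hji, lie_skew]

noncomputable def LieEquiv.ofStructureConstants [Fintype ι] [LinearOrder ι] (c : ι → ι → ι → R)
    (b : Basis ι R L) (b' : Basis ι R L')
    (hb : ∀ i j, i < j → ⁅b i, b j⁆ = ∑ k, c i j k • b k)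
    (hb' : ∀ i j, i < j → ⁅b' i, b' j⁆ = ∑ k, c i j k • b' k) : L ≃ₗ⁅R⁆ L' :=
  { b.equiv b' (Equiv.refl ι) with
    map_lie' := fun {x y} ↦ (b.equiv b' (Equiv.refl ι)).toLinearMap.map_lie_of_basis_of_lt b
      (fun i j hij ↦ by simp [hb i j hij, hb' i j hij, Basis.equiv_apply]) x y }

theorem lie_eq_neg_sum_of_gt [LinearOrder ι] [Fintype ι] {c : ι → ι → ι → R} {b : ι → L}
    (hb : ∀ i j, i < j → ⁅b i, b j⁆ = ∑ k, c i j k • b k) {i j : ι} (hji : j < i) :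
    ⁅b i, b j⁆ = -∑ k, c j i k • b k := by
  rw [← hb j i hji, lie_skew]

end StructureConstants

theorem Realizes.nonempty_lieEquiv {L L' : Type} [LieRing L] [LieAlgebra ℂ L] [LieRing L']
    [LieAlgebra ℂ L'] {c : Fin 5 → Fin 5 → Fin 5 → ℂ} (hL : Realizes L c) (hL' : Realizes L' c) :
    Nonempty (L ≃ₗ⁅ℂ⁆ L') := by
  obtain ⟨b, hb⟩ := hL
  obtain ⟨b', hb'⟩ := hL'
  exact ⟨LieEquiv.ofStructureConstants c b b' hb hb'⟩

theorem Realizes.patternL_of_patternL' {L : Type} [LieRing L] [LieAlgebra ℂ L]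
    (h : Realizes L patternL') : Realizes L patternL := by
  obtain ⟨f, hf⟩ := h
  let σ : Equiv.Perm (Fin 5) := ⟨![1, 0, 4, 2, 3], ![1, 0, 3, 4, 2], by decide, by decide⟩
  let u : Fin 5 → ℂˣ := ![-1, -1, 1, 1, -1]
  refine ⟨(f.reindex σ.symm).unitsSMul u, fun i j ↦ ?_⟩
  fin_cases i <;> fin_cases j <;>
    simp [Basis.unitsSMul_apply, Basis.reindex_apply, σ, u, Units.smul_def, patternL, patternL',
      hf, lie_eq_neg_sum_of_gt hf, Fin.sum_univ_five]

/-- The nilpotent algebras `d₉(0:0)` and `d₁₂(0:0:0)` are isomorphic. -/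
theorem d9_d12_generic_iso
    (L L' : Type) [LieRing L] [LieAlgebra ℂ L] [LieRing L'] [LieAlgebra ℂ L']
    (hL : Realizes L patternL) (hL' : Realizes L' patternL') :
    Nonempty (L ≃ₗ⁅ℂ⁆ L') :=
  hL.nonempty_lieEquiv hL'.patternL_of_patternL'
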